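/- arXiv:1411.1040 — 7 statements merged into one kernel-verified Lean document; each statement's English description precedes it below -/
import Mathlib

section
/- Let X = [[A,B],[C,D]] be a complex block matrix with square diagonal blocks A (p×p) and D (q×q), and suppose D is invertible. Let T = [[TA,TB],[TC,TD]] be another block matrix with the same block structure, and let X' = T·X, with blocks A', B', C', D'. Set Z = B·D⁻¹ and X₀ = A − B·D⁻¹·C. If D' is invertible, then the matrix TC·Z + TD is invertible, and moreover B'·(D')⁻¹ = (TA·Z + TB)·(TC·Z + TD)⁻¹ and A' − B'·(D')⁻¹·C' = TA·X₀ − (TA·Z + TB)·(TC·Z + TD)⁻¹·TC·X₀. -/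
open Matrix

/-- Evolution of the Schur complement and the quotient datum under left
multiplication by a block matrix. -/
theorem stmt_0 {p q : ℕ}
    (A TA A' : Matrix (Fin p) (Fin p) ℂ)
    (B TB B' : Matrix (Fin p) (Fin q) ℂ)
    (C TC C' : Matrix (Fin q) (Fin p) ℂ)
    (D TD D' : Matrix (Fin q) (Fin q) ℂ)
    (hD : IsUnit D)
    (hX' : Matrix.fromBlocks A' B' C' D' =
      Matrix.fromBlocks TA TB TC TD * Matrix.fromBlocks A B C D)
    (hD' : IsUnit D') :
    IsUnit (TC * (B * D⁻¹) + TD) ∧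
    B' * D'⁻¹ = (TA * (B * D⁻¹) + TB) * (TC * (B * D⁻¹) + TD)⁻¹ ∧
    A' - B' * D'⁻¹ * C' =
      TA * (A - B * D⁻¹ * C) -
        (TA * (B * D⁻¹) + TB) * (TC * (B * D⁻¹) + TD)⁻¹ *
          (TC * (A - B * D⁻¹ * C)) := by
  have hDdet : IsUnit D.det := (Matrix.isUnit_iff_isUnit_det D).mp hD
  have hD'det : IsUnit D'.det := (Matrix.isUnit_iff_isUnit_det D').mp hD'
  have hA'eq : A' = TA * A + TB * C := by
    have := congrArg Matrix.toBlocks₁₁ hX'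
    simpa [Matrix.fromBlocks_multiply] using this
  have hB'eq : B' = TA * B + TB * D := by
    have := congrArg Matrix.toBlocks₁₂ hX'
    simpa [Matrix.fromBlocks_multiply] using this
  have hC'eq : C' = TC * A + TD * C := by
    have := congrArg Matrix.toBlocks₂₁ hX'
    simpa [Matrix.fromBlocks_multiply] using this
  have hD'eq : D' = TC * B + TD * D := by
    have := congrArg Matrix.toBlocks₂₂ hX'
    simpa [Matrix.fromBlocks_multiply] using this
  have hZ : TC * (B * D⁻¹) + TD = D' * D⁻¹ := by
    rw [hD'eq, Matrix.add_mul, Matrix.mul_assoc,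
      Matrix.mul_nonsing_inv_cancel_right _ _ hDdet]
  have hUnit : IsUnit (TC * (B * D⁻¹) + TD) := by
    rw [hZ]
    exact hD'.mul ((Matrix.isUnit_nonsing_inv_iff).mpr hD)
  have hinv : (TC * (B * D⁻¹) + TD)⁻¹ = D * D'⁻¹ := by
    rw [hZ, Matrix.mul_inv_rev, Matrix.nonsing_inv_nonsing_inv D hDdet]
  have hW : B' * D'⁻¹ = (TA * (B * D⁻¹) + TB) * (TC * (B * D⁻¹) + TD)⁻¹ := by
    rw [hinv, hB'eq]
    simp only [Matrix.add_mul, Matrix.mul_assoc,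
      Matrix.nonsing_inv_mul_cancel_left _ _ hDdet]
  refine ⟨hUnit, hW, ?_⟩
  rw [← hW]
  have hK : B' * D'⁻¹ * (TC * (B * D⁻¹) + TD) = TA * (B * D⁻¹) + TB := by
    rw [hW, Matrix.nonsing_inv_mul_cancel_right _ _
      ((Matrix.isUnit_iff_isUnit_det _).mp hUnit)]
  have hKC : TA * (B * D⁻¹) * C + TB * C =
      B' * D'⁻¹ * (TC * (B * D⁻¹)) * C + B' * D'⁻¹ * TD * C := by
    have := congrArg (fun M => M * C) hK
    simpa [Matrix.add_mul, Matrix.mul_add, ← Matrix.mul_assoc] using this.symm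
  rw [hA'eq, hC'eq]
  simp only [Matrix.mul_sub, Matrix.mul_add, Matrix.sub_mul, Matrix.add_mul,
    ← Matrix.mul_assoc] at hKC ⊢
  have h0 := sub_eq_zero.mpr hKC
  rw [← sub_eq_zero, ← h0]
  abel
end

section
/- For every γ > 0, s ∈ (0,1), K > 0, R > 0 and dimensions p, q ≥ 1 there exist λ₀ > 0 and K_Z > 0 such that the following holds for every 0 < λ < λ₀. Let S be a p×p complex matrix with ‖S‖ ≤ 1, let Γ₂ be an invertible q×q complex matrix with ‖Γ₂‖ ≤ e^{−γ}, and let (TAₙ), (TBₙ), (TCₙ), (TDₙ) (n ≥ 1) be sequences of complex matrices of sizes p×p, p×q, q×p, q×q respectively with ‖TAₙ − S‖ ≤ K·λ^s, ‖TBₙ‖ ≤ K·λ^s, ‖TCₙ‖ ≤ K·λ^s and ‖TDₙ − Γ₂⁻¹‖ ≤ K·λ^s for all n. Then for every p×q matrix Z₀ with ‖Z₀‖ ≤ R, the recursion Zₙ = (TAₙ·Z_{n−1} + TBₙ)·(TCₙ·Z_{n−1} + TDₙ)⁻¹ is well defined for all n ≥ 1 (i.e. each matrix TCₙ·Z_{n−1}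 + TDₙ is invertible), and ‖Zₙ‖ ≤ K_Z·(e^{−γ·n/2} + λ^s) for all n ≥ 1. -/
/-!
Write the denominator as `TCₙ Zₙ₋₁ + TDₙ = Γ₂⁻¹ (1 + E)` with
`‖E‖ ≤ ‖Γ₂‖ (‖TCₙ‖ ‖Zₙ₋₁‖ + ‖TDₙ - Γ₂⁻¹‖)`. While `‖Zₙ₋₁‖` stays bounded, `E` is small, so a
Neumann series inverts the denominator with an inverse of norm at most `e^{-γ} / (1 - ‖E‖)`.
The numerator has norm at most `(1 + Kλ^s) ‖Zₙ₋₁‖ + Kλ^s`, so for small `λ` one step is the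
affine contraction `‖Zₙ‖ ≤ e^{-γ/2} ‖Zₙ₋₁‖ + Kλ^s`. Iterating it gives
`‖Zₙ‖ ≤ e^{-γn/2} R + Kλ^s / (1 - e^{-γ/2})`, which keeps `Zₙ` in the bounded region where the
step estimate holds.
-/

open Matrix
open scoped Matrix.Norms.L2Operator

theorem norm_inverse_one_sub_le {R : Type*} [NormedRing R] [HasSummableGeomSeries R]
    [NormOneClass R] {t : R} (ht : ‖t‖ < 1) : ‖Ring.inverse (1 - t)‖ ≤ (1 - ‖t‖)⁻¹ := by
  simpa [← geom_series_eq_inverse t ht] using tsum_geometric_le_of_norm_lt_one t ht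

theorem Units.isUnit_and_norm_inverse_le {R : Type*} [NormedRing R] [HasSummableGeomSeries R]
    [NormOneClass R] (u : Rˣ) {b : R} (h : ‖(↑u⁻¹ : R) * (b - u)‖ < 1) :
    IsUnit b ∧ ‖Ring.inverse b‖ ≤ ‖(↑u⁻¹ : R)‖ / (1 - ‖(↑u⁻¹ : R) * (b - u)‖) := by
  set t := -((↑u⁻¹ : R) * (b - u))
  have ht : ‖t‖ < 1 := by rwa [norm_neg]
  have hb : b = u * (1 - t) := by simp [t, mul_sub, ← mul_assoc]
  have hinv : Ring.inverse b = Ring.inverse (1 - t) * ↑u⁻¹ := by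
    rw [hb, ← Units.val_oneSub t ht, ← Units.val_mul, Ring.inverse_unit, Ring.inverse_unit,
      _root_.mul_inv_rev, Units.val_mul]
  refine ⟨hb ▸ u.isUnit.mul (Units.oneSub t ht).isUnit, ?_⟩
  calc ‖Ring.inverse b‖ ≤ ‖Ring.inverse (1 - t)‖ * ‖(↑u⁻¹ : R)‖ := hinv ▸ norm_mul_le _ _
    _ ≤ (1 - ‖t‖)⁻¹ * ‖(↑u⁻¹ : R)‖ := by gcongr; exact norm_inverse_one_sub_le ht
    _ = _ := by rw [norm_neg, div_eq_inv_mul]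

theorem le_pow_mul_add_div_of_le_mul_add {x : ℕ → ℝ} {h c R : ℝ} (hh0 : 0 ≤ h) (hh1 : h < 1)
    (hc : 0 ≤ c) (hx0 : x 0 ≤ R)
    (hstep : ∀ n, x n ≤ h ^ n * R + c / (1 - h) → x (n + 1) ≤ h * x n + c) :
    ∀ n, x n ≤ h ^ n * R + c / (1 - h)
  | 0 => by
    have : 0 ≤ c / (1 - h) := div_nonneg hc (by linarith)
    simp only [pow_zero, one_mul]
    linarith
  | n + 1 => by
    have ih := le_pow_mul_add_div_of_le_mul_add hh0 hh1 hc hx0 hstep n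
    calc x (n + 1) ≤ h * x n + c := hstep n ih
      _ ≤ h * (h ^ n * R + c / (1 - h)) + c := by gcongr
      _ = h ^ (n + 1) * R + c / (1 - h) := by field_simp [(by linarith : (1 - h) ≠ 0)]; ring

theorem exists_pos_forall_mul_rpow_le {s K η : ℝ} (hs : 0 < s) (hK : 0 < K) (hη : 0 < η) :
    ∃ l₀ > 0, ∀ l : ℝ, 0 < l → l < l₀ → K * l ^ s ≤ min K η := by
  set c := min 1 (η / K)
  have hc : 0 < c := lt_min one_pos (div_pos hη hK)
  refine ⟨c ^ s⁻¹, Real.rpow_pos_of_pos hc _, fun l hl hll₀ => ?_⟩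
  have hlc : l ^ s ≤ c := calc
    l ^ s ≤ (c ^ s⁻¹) ^ s := Real.rpow_le_rpow hl.le hll₀.le hs.le
    _ = c := Real.rpow_inv_rpow hc.le hs.ne'
  calc K * l ^ s ≤ K * c := by gcongr
    _ = min K η := by rw [mul_min_of_nonneg _ _ hK.le, mul_one, mul_div_cancel₀ _ hK.ne']

namespace Matrix

variable {𝕜 m n : Type*} [RCLike 𝕜] [Fintype m] [Fintype n] [DecidableEq m] [DecidableEq n]

theorem isUnit_and_norm_inv_le_of_norm_sub_inv_le [Nonempty n] {Γ D : Matrix n n 𝕜}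
    (hΓ : IsUnit Γ) {g δ : ℝ} (hΓg : ‖Γ‖ ≤ g) (hδ : δ < 1) (hD : g * ‖D - Γ⁻¹‖ ≤ δ) :
    IsUnit D ∧ ‖D⁻¹‖ ≤ g / (1 - δ) := by
  set u := hΓ.unit⁻¹
  have hu : (↑u⁻¹ : Matrix n n 𝕜) = Γ := by simp [u]
  have hu' : (u : Matrix n n 𝕜) = Γ⁻¹ := by simp [u, Matrix.coe_units_inv]
  have hsmall : ‖(↑u⁻¹ : Matrix n n 𝕜) * (D - u)‖ ≤ δ := by
    rw [hu, hu']
    calc _ ≤ ‖Γ‖ * ‖D - Γ⁻¹‖ := l2_opNorm_mul _ _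
      _ ≤ g * ‖D - Γ⁻¹‖ := by gcongr
      _ ≤ δ := hD
  obtain ⟨hDu, hDinv⟩ := u.isUnit_and_norm_inverse_le (hsmall.trans_lt hδ)
  refine ⟨hDu, ?_⟩
  rw [nonsing_inv_eq_ringInverse]
  calc _ ≤ _ := hDinv
    _ ≤ g / (1 - δ) :=
      div_le_div₀ ((norm_nonneg _).trans hΓg) (hu ▸ hΓg) (by linarith) (by linarith)

theorem norm_mul_add_le_of_norm_sub_le {A S : Matrix m m 𝕜} {B W : Matrix m n 𝕜}
    {ε : ℝ} (hS : ‖S‖ ≤ 1) (hA : ‖A - S‖ ≤ ε) (hB : ‖B‖ ≤ ε) :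
    ‖A * W + B‖ ≤ (1 + ε) * ‖W‖ + ε := by
  have hA' : ‖A‖ ≤ 1 + ε := by simpa using (norm_add_le (A - S) S).trans (by linarith)
  calc ‖A * W + B‖ ≤ ‖A‖ * ‖W‖ + ‖B‖ := (norm_add_le _ _).trans (by gcongr; exact l2_opNorm_mul _ _)
    _ ≤ (1 + ε) * ‖W‖ + ε := by gcongr

theorem isUnit_and_norm_mobius_le [Nonempty n] {S A : Matrix m m 𝕜}
    {B W : Matrix m n 𝕜} {C : Matrix n m 𝕜} {Γ D : Matrix n n 𝕜} {g h ε M : ℝ}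
    (hΓ : IsUnit Γ) (hΓg : ‖Γ‖ ≤ g) (hg : 0 < g) (hgh : g < h) (hh : h ≤ 1)
    (hS : ‖S‖ ≤ 1) (hA : ‖A - S‖ ≤ ε) (hB : ‖B‖ ≤ ε) (hC : ‖C‖ ≤ ε) (hD : ‖D - Γ⁻¹‖ ≤ ε)
    (hW : ‖W‖ ≤ M) (hε : ε * (g + (M + 1) * h) ≤ h - g) :
    IsUnit (C * W + D) ∧ ‖(A * W + B) * (C * W + D)⁻¹‖ ≤ h * ‖W‖ + ε := by
  have hε0 : 0 ≤ ε := (norm_nonneg _).trans hB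
  set δ := ε * (M + 1)
  -- `δ` bounds the perturbation of the denominator, and `hε` is `(1 + ε) g / (1 - δ) ≤ h`.
  have hgδ : (1 + ε) * g ≤ (1 - δ) * h := by linear_combination hε
  have hδ : δ < 1 := by nlinarith
  have hsmall : g * ‖C * W + D - Γ⁻¹‖ ≤ δ := by
    have : ‖C * W + (D - Γ⁻¹)‖ ≤ δ := calc
      _ ≤ ‖C‖ * ‖W‖ + ‖D - Γ⁻¹‖ := (norm_add_le _ _).trans (by gcongr; exact l2_opNorm_mul _ _)
      _ ≤ ε * M + ε := by gcongr
      _ = δ := by ring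
    rw [add_sub_assoc]
    exact (mul_le_of_le_one_left (norm_nonneg _) (by linarith)).trans this
  obtain ⟨hunit, hinv⟩ := isUnit_and_norm_inv_le_of_norm_sub_inv_le hΓ hΓg hδ hsmall
  refine ⟨hunit, ?_⟩
  set r := g / (1 - δ)
  have hr : (1 + ε) * r ≤ h := by rw [mul_div_assoc', div_le_iff₀ (by linarith)]; linarith
  have hr1 : r ≤ 1 := by nlinarith [div_nonneg hg.le (by linarith : (0:ℝ) ≤ 1 - δ)]
  calc _ ≤ ‖A * W + B‖ * ‖(C * W + D)⁻¹‖ := l2_opNorm_mul _ _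
    _ ≤ ((1 + ε) * ‖W‖ + ε) * r := by
      gcongr
      exact norm_mul_add_le_of_norm_sub_le hS hA hB
    _ = (1 + ε) * r * ‖W‖ + ε * r := by ring
    _ ≤ h * ‖W‖ + ε := by gcongr; exact mul_le_of_le_one_right hε0 hr1

theorem isUnit_and_norm_iterate_mobius_le [Nonempty n] {S : Matrix m m 𝕜}
    {Γ : Matrix n n 𝕜} {TA : ℕ → Matrix m m 𝕜} {TB : ℕ → Matrix m n 𝕜} {TC : ℕ → Matrix n m 𝕜}
    {TD : ℕ → Matrix n n 𝕜} {Z : ℕ → Matrix m n 𝕜} {g h ε R : ℝ}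
    (hΓ : IsUnit Γ) (hΓg : ‖Γ‖ ≤ g) (hg : 0 < g) (hgh : g < h) (hh : h < 1) (hS : ‖S‖ ≤ 1)
    (hTA : ∀ k, ‖TA (k + 1) - S‖ ≤ ε) (hTB : ∀ k, ‖TB (k + 1)‖ ≤ ε)
    (hTC : ∀ k, ‖TC (k + 1)‖ ≤ ε) (hTD : ∀ k, ‖TD (k + 1) - Γ⁻¹‖ ≤ ε) (hZ0 : ‖Z 0‖ ≤ R)
    (hZ : ∀ k, Z (k + 1) = (TA (k + 1) * Z k + TB (k + 1)) * (TC (k + 1) * Z k + TD (k + 1))⁻¹)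
    (hε : ε * (g + (R + ε / (1 - h) + 1) * h) ≤ h - g) (k : ℕ) :
    IsUnit (TC (k + 1) * Z k + TD (k + 1)) ∧ ‖Z k‖ ≤ h ^ k * R + ε / (1 - h) := by
  have hR : 0 ≤ R := (norm_nonneg _).trans hZ0
  have hle_sup : ∀ k, ‖Z k‖ ≤ h ^ k * R + ε / (1 - h) → ‖Z k‖ ≤ R + ε / (1 - h) :=
    fun k hk => hk.trans <| by
      gcongr; exact mul_le_of_le_one_left hR (pow_le_one₀ (by linarith) hh.le)
  have hstep : ∀ k, ‖Z k‖ ≤ R + ε / (1 - h) →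
      IsUnit (TC (k + 1) * Z k + TD (k + 1)) ∧ ‖Z (k + 1)‖ ≤ h * ‖Z k‖ + ε := fun k hk =>
    hZ k ▸ isUnit_and_norm_mobius_le hΓ hΓg hg hgh hh.le hS (hTA k) (hTB k) (hTC k) (hTD k) hk hε
  have hbound : ∀ k, ‖Z k‖ ≤ h ^ k * R + ε / (1 - h) :=
    le_pow_mul_add_div_of_le_mul_add (by linarith) hh ((norm_nonneg _).trans (hTB 0)) hZ0
      fun k hk => (hstep k (hle_sup k hk)).2
  exact ⟨(hstep k (hle_sup k (hbound k))).1, hbound k⟩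

end Matrix

theorem stmt_2_general (γ s K R : ℝ) (hγ : 0 < γ) (hs0 : 0 < s)
    (hK : 0 < K) (hR : 0 < R) (p q : ℕ) (hq : 1 ≤ q) :
    ∃ l₀ > 0, ∃ KZ > 0, ∀ l : ℝ, 0 < l → l < l₀ →
      ∀ (S : Matrix (Fin p) (Fin p) ℂ), ‖S‖ ≤ 1 →
      ∀ (Γ₂ : Matrix (Fin q) (Fin q) ℂ), IsUnit Γ₂ → ‖Γ₂‖ ≤ Real.exp (-γ) →
      ∀ (TA : ℕ → Matrix (Fin p) (Fin p) ℂ) (TB : ℕ → Matrix (Fin p) (Fin q) ℂ)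
        (TC : ℕ → Matrix (Fin q) (Fin p) ℂ) (TD : ℕ → Matrix (Fin q) (Fin q) ℂ),
      (∀ n, 1 ≤ n → ‖TA n - S‖ ≤ K * l ^ s) →
      (∀ n, 1 ≤ n → ‖TB n‖ ≤ K * l ^ s) →
      (∀ n, 1 ≤ n → ‖TC n‖ ≤ K * l ^ s) →
      (∀ n, 1 ≤ n → ‖TD n - Γ₂⁻¹‖ ≤ K * l ^ s) →
      ∀ (Z : ℕ → Matrix (Fin p) (Fin q) ℂ), ‖Z 0‖ ≤ R →
      (∀ n, 1 ≤ n →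
        Z n = (TA n * Z (n - 1) + TB n) * (TC n * Z (n - 1) + TD n)⁻¹) →
      ∀ n, 1 ≤ n →
        IsUnit (TC n * Z (n - 1) + TD n) ∧
        ‖Z n‖ ≤ KZ * (Real.exp (-γ * n / 2) + l ^ s) := by
  have : Nonempty (Fin q) := ⟨⟨0, hq⟩⟩
  set g := Real.exp (-γ)
  set h := Real.exp (-γ / 2)
  have hgh : g < h := Real.exp_lt_exp.mpr (by linarith)
  have hh1 : h < 1 := Real.exp_lt_one_iff.mpr (by linarith)
  set M := R + K / (1 - h)
  set η := (h - g) / (g + (M + 1) * h)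
  have hη : 0 < η := div_pos (by linarith) (by positivity)
  obtain ⟨l₀, hl₀, hsmall⟩ := exists_pos_forall_mul_rpow_le hs0 hK hη
  refine ⟨l₀, hl₀, max R (K / (1 - h)), lt_max_of_lt_left hR, ?_⟩
  intro l hl hll₀ S hS Γ₂ hΓ hΓg TA TB TC TD hTA hTB hTC hTD Z hZ0 hZrec
  obtain ⟨hεK, hεη⟩ := le_min_iff.mp (hsmall l hl hll₀)
  have hεM : R + K * l ^ s / (1 - h) ≤ M :=
    add_le_add_right (div_le_div_of_nonneg_right hεK (sub_nonneg.mpr hh1.le)) R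
  have hε : K * l ^ s * (g + (R + K * l ^ s / (1 - h) + 1) * h) ≤ h - g := calc
    _ ≤ η * (g + (M + 1) * h) := by gcongr
    _ = h - g := div_mul_cancel₀ _ (by positivity)
  have hZ := isUnit_and_norm_iterate_mobius_le hΓ hΓg (Real.exp_pos _) hgh hh1 hS
    (fun n => hTA (n + 1) n.succ_pos) (fun n => hTB (n + 1) n.succ_pos)
    (fun n => hTC (n + 1) n.succ_pos) (fun n => hTD (n + 1) n.succ_pos) hZ0
    (fun n => by simpa using hZrec (n + 1) n.succ_pos) hε
  intro n hn
  obtain ⟨n, rfl⟩ := Nat.exists_eq_add_of_le' hn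
  refine ⟨by simpa using (hZ n).1, (hZ (n + 1)).2.trans ?_⟩
  rw [show Real.exp (-γ * ↑(n + 1) / 2) = h ^ (n + 1) by rw [← Real.exp_nat_mul]; ring_nf]
  calc _ = h ^ (n + 1) * R + K / (1 - h) * l ^ s := by ring
    _ ≤ h ^ (n + 1) * max R (K / (1 - h)) + max R (K / (1 - h)) * l ^ s := by
      gcongr; exacts [le_max_left _ _, le_max_right _ _]
    _ = _ := by ring

/-- Uniform smallness of the `Z`-part of the Markov process: the recursion
`Zₙ = (TAₙ Z_{n-1} + TBₙ)(TCₙ Z_{n-1} + TDₙ)⁻¹` is well defined and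
`‖Zₙ‖ ≤ K_Z (e^{-γ n/2} + λ^s)`.  The norm is the `L²`-operator norm. -/
theorem stmt_2 (γ s K R : ℝ) (hγ : 0 < γ) (hs0 : 0 < s) (hs1 : s < 1)
    (hK : 0 < K) (hR : 0 < R) (p q : ℕ) (hp : 1 ≤ p) (hq : 1 ≤ q) :
    ∃ l₀ > 0, ∃ KZ > 0, ∀ l : ℝ, 0 < l → l < l₀ →
      ∀ (S : Matrix (Fin p) (Fin p) ℂ), ‖S‖ ≤ 1 →
      ∀ (Γ₂ : Matrix (Fin q) (Fin q) ℂ), IsUnit Γ₂ → ‖Γ₂‖ ≤ Real.exp (-γ) →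
      ∀ (TA : ℕ → Matrix (Fin p) (Fin p) ℂ) (TB : ℕ → Matrix (Fin p) (Fin q) ℂ)
        (TC : ℕ → Matrix (Fin q) (Fin p) ℂ) (TD : ℕ → Matrix (Fin q) (Fin q) ℂ),
      (∀ n, 1 ≤ n → ‖TA n - S‖ ≤ K * l ^ s) →
      (∀ n, 1 ≤ n → ‖TB n‖ ≤ K * l ^ s) →
      (∀ n, 1 ≤ n → ‖TC n‖ ≤ K * l ^ s) →
      (∀ n, 1 ≤ n → ‖TD n - Γ₂⁻¹‖ ≤ K * l ^ s) →
      ∀ (Z : ℕ → Matrix (Fin p) (Fin q) ℂ), ‖Z 0‖ ≤ R →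
      (∀ n, 1 ≤ n →
        Z n = (TA n * Z (n - 1) + TB n) * (TC n * Z (n - 1) + TD n)⁻¹) →
      ∀ n, 1 ≤ n →
        IsUnit (TC n * Z (n - 1) + TD n) ∧
        ‖Z n‖ ≤ KZ * (Real.exp (-γ * n / 2) + l ^ s) :=
  stmt_2_general γ s K R hγ hs0 hK hR p q hq
end

section
/- Let a₁, …, a_m be pairwise distinct real numbers and let I ⊆ ℝ be a nonempty open interval such that |E − a_j| < 2 for every E ∈ I and every j = 1, …, m. For E ∈ I set φ_j(E) = arccos((E − a_j)/2). Then for every nonzero integer vector w = (w₁,…,w_m) ∈ ℤ^m, the function E ↦ ∑_{j=1}^m w_j·φ_j(E) is not constant on I. -/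
/-!
Each phase `arccos((E - a_j)/2)` is real-analytic wherever `|E - a_j| < 2`, so a nonzero
combination `F = ∑ w_j φ_j` that is constant on `I` is, by the identity theorem, constant on the
whole interval `(max a_j - 2, min a_j + 2)` (indices with `w_j ≠ 0`), and by continuity also at its
right endpoint `min a_j + 2`. At that endpoint the phase of the minimising index `j₀` reaches
`arccos 1` and has a square-root singularity, while all other phases are smooth there because the
`a_j` are distinct and all lie within `4` of each other. Hence `F` is not differentiable from the
left at the endpoint, which contradicts its constancy.
-/

open Real Set Filter Topology
open scoped ContDiff

namespace Real

theorem analyticAt_arccos {x : ℝ} (h₁ : x ≠ -1) (h₂ : x ≠ 1) : AnalyticAt ℝ arccos x :=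
  (contDiffAt_arccos h₁ h₂ (n := ω)).analyticAt

theorem not_differentiableWithinAt_const_mul_arccos {c : ℝ} (hc : c ≠ 0) (b : ℝ) :
    ¬ DifferentiableWithinAt ℝ (fun x => c * arccos ((x - b) / 2)) (Iic (b + 2)) (b + 2) := by
  intro h
  have hmaps : MapsTo (fun y : ℝ => 2 * y + b) (Iic 1) (Iic (b + 2)) := fun y hy => by
    simp only [mem_Iic] at hy ⊢
    linarith
  have h' : DifferentiableWithinAt ℝ (fun x => c * arccos ((x - b) / 2)) (Iic (b + 2))
      (2 * 1 + b) := by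
    rwa [show (2 : ℝ) * 1 + b = b + 2 by ring]
  have hcomp :=
    (h'.comp 1 ((differentiableWithinAt_id.const_mul 2).add_const b) hmaps).const_mul c⁻¹
  refine differentiableWithinAt_arccos_Iic.1 (hcomp.congr (fun y _ => ?_) ?_) rfl <;>
    simp [hc]

end Real

theorem eqOn_Icc_of_analyticOnNhd_Ioo {f : ℝ → ℝ} {l u c x₀ : ℝ}
    (hf : AnalyticOnNhd ℝ f (Ioo l u)) (hcont : ContinuousOn f (Icc l u)) (hx₀ : x₀ ∈ Ioo l u)
    (hc : f =ᶠ[𝓝 x₀] fun _ => c) : EqOn f (fun _ => c) (Icc l u) :=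
  (hf.eqOn_of_preconnected_of_eventuallyEq analyticOnNhd_const isPreconnected_Ioo hx₀ hc)
    |>.of_subset_closure hcont continuousOn_const Ioo_subset_Icc_self
      (closure_Ioo (hx₀.1.trans hx₀.2).ne).ge

section PhaseSum

variable {ι : Type*} (s : Finset ι) (a w : ι → ℝ)

noncomputable def phaseSum (E : ℝ) : ℝ :=
  ∑ j ∈ s, w j * arccos ((E - a j) / 2)

theorem continuous_phaseSum : Continuous (phaseSum s a w) := by
  unfold phaseSum
  fun_prop

theorem analyticOnNhd_phaseSum {U : Set ℝ} (hU : ∀ x ∈ U, ∀ j ∈ s, |x - a j| < 2) :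
    AnalyticOnNhd ℝ (phaseSum s a w) U := by
  intro x hx
  refine Finset.analyticAt_fun_sum _ fun j hj => analyticAt_const.mul ?_
  obtain ⟨h₁, h₂⟩ := abs_lt.1 (hU x hx j hj)
  exact (analyticAt_arccos (by intro h; linarith) (by intro h; linarith)).comp
    (by fun_prop)

theorem not_differentiableWithinAt_phaseSum {j₀ : ι} (hj₀ : j₀ ∈ s) (hw : w j₀ ≠ 0)
    (ha : ∀ j ∈ s, j ≠ j₀ → a j₀ < a j ∧ a j < a j₀ + 4) :
    ¬ DifferentiableWithinAt ℝ (phaseSum s a w) (Iic (a j₀ + 2)) (a j₀ + 2) := by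
  classical
  intro h
  have hrest : DifferentiableAt ℝ (phaseSum (s.erase j₀) a w) (a j₀ + 2) := by
    refine DifferentiableAt.fun_sum fun j hj => ?_
    obtain ⟨hne, hj⟩ := Finset.mem_erase.1 hj
    obtain ⟨h₁, h₂⟩ := ha j hj hne
    have hx : (a j₀ + 2 - a j) / 2 ≠ -1 ∧ (a j₀ + 2 - a j) / 2 ≠ 1 :=
      ⟨by intro h; linarith, by intro h; linarith⟩
    exact ((differentiableAt_arccos.2 hx).comp (f := fun y => (y - a j) / 2) (a j₀ + 2)
      (by fun_prop)).const_mul (w j)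
  have hsplit : (fun x => w j₀ * arccos ((x - a j₀) / 2)) =
      phaseSum s a w - phaseSum (s.erase j₀) a w :=
    funext fun x =>
      eq_sub_of_add_eq (Finset.add_sum_erase s (fun j => w j * arccos ((x - a j) / 2)) hj₀)
  apply not_differentiableWithinAt_const_mul_arccos hw (a j₀)
  rw [hsplit]
  exact h.sub hrest.differentiableWithinAt

theorem not_eventuallyConst_phaseSum {j₀ : ι} (hj₀ : j₀ ∈ s) (hw : w j₀ ≠ 0)
    (hmin : ∀ j ∈ s, j ≠ j₀ → a j₀ < a j) {x₀ : ℝ} (hx₀ : ∀ j ∈ s, |x₀ - a j| < 2) :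
    ¬ EventuallyConst (phaseSum s a w) (𝓝 x₀) := by
  intro hconst
  obtain ⟨c, hc⟩ := eventuallyConst_iff_exists_eventuallyEq.1 hconst
  obtain ⟨j₁, hj₁, hmax⟩ := s.exists_max_image a ⟨j₀, hj₀⟩
  have hx₀U : x₀ ∈ Ioo (a j₁ - 2) (a j₀ + 2) :=
    ⟨by linarith [(abs_lt.1 (hx₀ j₁ hj₁)).1], by linarith [(abs_lt.1 (hx₀ j₀ hj₀)).2]⟩
  have hU : ∀ x ∈ Ioo (a j₁ - 2) (a j₀ + 2), ∀ j ∈ s, |x - a j| < 2 := fun x hx j hj => by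
    have hle : a j₀ ≤ a j := (eq_or_ne j j₀).elim (fun h => h ▸ le_rfl) (hmin j hj · |>.le)
    exact abs_lt.2 ⟨by linarith [hx.1, hmax j hj], by linarith [hx.2]⟩
  have hF := eqOn_Icc_of_analyticOnNhd_Ioo (analyticOnNhd_phaseSum s a w hU)
    (continuous_phaseSum s a w).continuousOn hx₀U hc
  have hlt : a j₁ - 2 < a j₀ + 2 := hx₀U.1.trans hx₀U.2
  refine not_differentiableWithinAt_phaseSum s a w hj₀ hw (fun j hj hne => ⟨hmin j hj hne, ?_⟩) ?_
  · linarith [(abs_lt.1 (hx₀ j hj)).1, (abs_lt.1 (hx₀ j₀ hj₀)).2]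
  · exact (differentiableWithinAt_const c).congr_of_eventuallyEq
      (eventually_of_mem (Ioc_mem_nhdsLE hlt) fun x hx => hF (Ioc_subset_Icc_self hx))
      (hF (right_mem_Icc.2 hlt.le))

end PhaseSum

/-- No nonzero integer combination of the phase functions
`φ_j(E) = arccos((E − a_j)/2)` is constant on the interval `I`. -/
theorem stmt_5 {m : ℕ} (a : Fin m → ℝ) (ha : Function.Injective a)
    (lo hi : ℝ) (hlohi : lo < hi)
    (hI : ∀ E ∈ Set.Ioo lo hi, ∀ j, |E - a j| < 2)
    (w : Fin m → ℤ) (hw : w ≠ 0) :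
    ¬ (∀ E₁ ∈ Set.Ioo lo hi, ∀ E₂ ∈ Set.Ioo lo hi,
        (∑ j, (w j : ℝ) * Real.arccos ((E₁ - a j) / 2)) =
        (∑ j, (w j : ℝ) * Real.arccos ((E₂ - a j) / 2))) := by
  classical
  intro hconst
  set s := Finset.univ.filter fun j => w j ≠ 0
  have hsum (E : ℝ) : ∑ j, (w j : ℝ) * arccos ((E - a j) / 2) = phaseSum s a (w ·) E := by
    unfold phaseSum
    refine (Finset.sum_filter_of_ne fun j _ hj => ?_).symm
    exact left_ne_zero_of_mul hj |> Int.cast_ne_zero.1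
  obtain ⟨i, hi⟩ := Function.ne_iff.1 hw
  obtain ⟨j₀, hj₀, hmin⟩ := s.exists_min_image a ⟨i, Finset.mem_filter.2 ⟨Finset.mem_univ i, hi⟩⟩
  obtain ⟨E₀, hE₀⟩ := nonempty_Ioo.2 hlohi
  refine not_eventuallyConst_phaseSum s a (w ·) hj₀ (by simpa [s] using hj₀)
    (fun j hj hne => (hmin j hj).lt_of_ne (ha.ne hne.symm)) (fun j _ => hI E₀ hE₀ j) ?_
  refine eventuallyConst_iff_exists_eventuallyEq.2 ⟨phaseSum s a (w ·) E₀, ?_⟩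
  filter_upwards [Ioo_mem_nhds hE₀.1 hE₀.2] with E hE
  rw [← hsum, ← hsum]
  exact hconst E hE E₀ hE₀
end

section
/- Let a₁, …, a_m be pairwise distinct real numbers and let I ⊆ ℝ be a nonempty open interval such that |E − a_j| < 2 for every E ∈ I and every j = 1, …, m. For E ∈ I set z_j(E) = exp(i·arccos((E − a_j)/2)). Then for Lebesgue-almost every E ∈ I, the tuple (z₁(E),…,z_m(E)) is chaotic, i.e. for all indices i, j, k, l ∈ {1,…,m}: z_i·z_j·z_k·z_l ≠ 1, conj(z_i)·z_j·z_k·z_l ≠ 1, and if conj(z_i)·conj(z_j)·z_k·z_l = 1 then {i,j} = {k,l} as unordered pairs. -/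
/-!
Write `z_j(E) = exp(i θ_j(E))` with `θ_j(E) = arccos((E - a_j)/2)`. Each of the monomials in
question is `exp(i Φ(E))` with `Φ = ∑_{b ∈ P} θ_b - ∑_{b ∈ N} θ_b` for multisets `P`, `N` of
the `a_j`. This is real-analytic on `I`, so unless it is identically `1` it equals `1` only on
a discrete, hence null, set. If it is identically `1`, then `Φ' ≡ 0`, that is
`∑_{b ∈ P} g_b = ∑_{b ∈ N} g_b` on `I` with `g_b(E) = (4 - (E - b)²)^{-1/2}`. By analytic
continuation this identity persists up to `E = β + 2`, `β` the smallest point involved, where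
`g_β` blows up while all other `g_b` stay bounded; so `β` has the same multiplicity in `P` and
`N`, and induction gives `P = N`. For the three kinds of monomials this forces
`{a_i, a_j} = {a_k, a_l}`.
-/

open MeasureTheory Set Filter Topology Complex
open scoped ContDiff

theorem ae_restrict_cexp_I_mul_ne_one {μ : Measure ℝ} [NullSingletonClass μ] {U : Set ℝ}
    (hUo : IsOpen U) (hUc : IsPreconnected U) {Φ Φ' : ℝ → ℝ} (hΦ : AnalyticOnNhd ℝ Φ U)
    (hΦ' : ∀ E ∈ U, HasDerivAt Φ (Φ' E) E) (hne : ∃ E ∈ U, Φ' E ≠ 0) :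
    ∀ᵐ E ∂μ.restrict U, cexp (I * Φ E) ≠ 1 := by
  have hf : AnalyticOnNhd ℝ (fun E => cexp (I * Φ E)) U := fun E hE =>
    (analyticAt_cexp.restrictScalars.comp
      (analyticAt_const.mul ((ofRealCLM.analyticAt _).comp (hΦ E hE))))
  rcases hf.eqOn_or_eventually_ne_of_preconnected analyticOnNhd_const hUc with h | h
  · obtain ⟨E, hE, hE'⟩ := hne
    have hderiv : HasDerivAt (fun E => cexp (I * Φ E)) (cexp (I * Φ E) * (I * Φ' E)) E :=
      ((hΦ' E hE).ofReal_comp.const_mul I).cexp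
    have hconst : HasDerivAt (fun E => cexp (I * Φ E)) 0 E :=
      (hasDerivAt_const E 1).congr_of_eventuallyEq
        (Filter.eventually_of_mem (hUo.mem_nhds hE) fun _ hx => h hx)
    have := hderiv.unique hconst
    simp only [mul_eq_zero, Complex.exp_ne_zero, Complex.I_ne_zero, Complex.ofReal_eq_zero,
      false_or] at this
    exact absurd this hE'
  · exact ae_restrict_le_codiscreteWithin hUo.measurableSet h

noncomputable def phase (b E : ℝ) : ℝ := Real.arccos ((E - b) / 2)

noncomputable def phaseSpeed (b E : ℝ) : ℝ := (√(4 - (E - b) ^ 2))⁻¹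

/-- `cexp (I * netPhase P N E)` is the product of the `z_b(E)` over `b ∈ P` and of the
`conj (z_b(E))` over `b ∈ N`. -/
noncomputable def netPhase (P N : Multiset ℝ) (E : ℝ) : ℝ :=
  (P.map (phase · E)).sum - (N.map (phase · E)).sum

section Phase

variable {b E : ℝ}

lemma four_sub_sq_pos (h : |E - b| < 2) : 0 < 4 - (E - b) ^ 2 := by
  nlinarith [abs_lt.mp h]

lemma neg_one_lt_sub_div_two (h : |E - b| < 2) : -1 < (E - b) / 2 := by
  linarith [abs_lt.mp h]

lemma sub_div_two_lt_one (h : |E - b| < 2) : (E - b) / 2 < 1 := by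
  linarith [abs_lt.mp h]

lemma hasDerivAt_phase (h : |E - b| < 2) : HasDerivAt (phase b) (-phaseSpeed b E) E := by
  have hsqrt : √(4 - (E - b) ^ 2) = 2 * √(1 - ((E - b) / 2) ^ 2) := by
    rw [show 4 - (E - b) ^ 2 = 2 ^ 2 * (1 - ((E - b) / 2) ^ 2) by ring,
      Real.sqrt_mul' _ (by nlinarith [four_sub_sq_pos h]), Real.sqrt_sq zero_le_two, mul_comm]
  have := (Real.hasDerivAt_arccos (neg_one_lt_sub_div_two h).ne' (sub_div_two_lt_one h).ne).comp E
    (((hasDerivAt_id E).sub_const b).div_const 2)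
  refine this.congr_deriv ?_
  rw [phaseSpeed, hsqrt]
  field_simp

lemma analyticAt_phase (h : |E - b| < 2) : AnalyticAt ℝ (phase b) E := by
  have hx : AnalyticAt ℝ (fun E => (E - b) / 2) E := by fun_prop
  exact (Real.contDiffAt_arccos (neg_one_lt_sub_div_two h).ne' (sub_div_two_lt_one h).ne
    (n := ω)).analyticAt.comp_of_eq hx rfl

lemma analyticAt_phaseSpeed (h : |E - b| < 2) : AnalyticAt ℝ (phaseSpeed b) E := by
  have hx : AnalyticAt ℝ (fun E => 4 - (E - b) ^ 2) E := by fun_prop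
  exact ((Real.contDiffAt_sqrt (four_sub_sq_pos h).ne' (n := ω)).analyticAt.comp_of_eq hx rfl).inv
    (Real.sqrt_pos.mpr (four_sub_sq_pos h)).ne'

end Phase

lemma eventually_abs_sub_lt_two_nhdsLT {β b : ℝ} (hβb : β ≤ b) (hb : b < β + 4) :
    ∀ᶠ E in 𝓝[<] (β + 2), |E - b| < 2 := by
  filter_upwards [Ioo_mem_nhdsLT (show b - 2 < β + 2 by linarith)] with E hE
  exact abs_lt.mpr ⟨by linarith [hE.1], by linarith [hE.2]⟩

-- `phaseSpeed β` blows up at `β + 2`: multiply through by `√(4 - (E - β) ^ 2) → 0`.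
lemma eq_zero_of_mul_phaseSpeed_eventuallyEq {β c : ℝ} {f : ℝ → ℝ} (hf : ContinuousAt f (β + 2))
    (h : ∀ᶠ E in 𝓝[<] (β + 2), c * phaseSpeed β E = f E) : c = 0 := by
  have hc : ∀ᶠ E in 𝓝[<] (β + 2), c = f E * √(4 - (E - β) ^ 2) := by
    filter_upwards [h, eventually_abs_sub_lt_two_nhdsLT le_rfl (by linarith)] with E hE hEβ
    rw [← hE, phaseSpeed, mul_assoc, inv_mul_cancel₀ (Real.sqrt_pos.mpr (four_sub_sq_pos hEβ)).ne',
      mul_one]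
  have hlim : Tendsto (fun E => f E * √(4 - (E - β) ^ 2)) (𝓝[<] (β + 2)) (𝓝 0) := by
    have hcont : ContinuousAt (fun E => f E * √(4 - (E - β) ^ 2)) (β + 2) :=
      hf.mul (by fun_prop)
    have hzero : f (β + 2) * √(4 - (β + 2 - β) ^ 2) = 0 := by norm_num
    simpa only [hzero] using hcont.tendsto.mono_left nhdsWithin_le_nhds
  exact tendsto_nhds_unique (tendsto_const_nhds.congr' hc) hlim

lemma analyticAt_sum_mul_phaseSpeed {s : Finset ℝ} {c : ℝ → ℝ} {E : ℝ}
    (hs : ∀ b ∈ s, |E - b| < 2) : AnalyticAt ℝ (fun E => ∑ b ∈ s, c b * phaseSpeed b E) E := by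
  have := Finset.analyticAt_sum (f := fun b E => c b * phaseSpeed b E) s fun b hb =>
    analyticAt_const.mul (analyticAt_phaseSpeed (hs b hb))
  rwa [Finset.sum_fn] at this

lemma sum_mul_phaseSpeed_eq_zero_of_eqOn_open {U : Set ℝ} (hUo : IsOpen U) (hU : U.Nonempty)
    {s : Finset ℝ} {c : ℝ → ℝ} (hs : ∀ E ∈ U, ∀ b ∈ s, |E - b| < 2)
    (h : ∀ E ∈ U, ∑ b ∈ s, c b * phaseSpeed b E = 0) {E : ℝ} (hE : ∀ b ∈ s, |E - b| < 2) :
    ∑ b ∈ s, c b * phaseSpeed b E = 0 := by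
  obtain ⟨E₀, hE₀⟩ := hU
  set J := ⋂ b ∈ s, Metric.ball b 2
  have hmemJ : ∀ E, E ∈ J ↔ ∀ b ∈ s, |E - b| < 2 := by
    simp only [J, mem_iInter₂, Metric.mem_ball, Real.dist_eq, implies_true]
  have hF : AnalyticOnNhd ℝ (fun E => ∑ b ∈ s, c b * phaseSpeed b E) J :=
    fun E hE => analyticAt_sum_mul_phaseSpeed ((hmemJ E).1 hE)
  exact hF.eqOn_zero_of_preconnected_of_eventuallyEq_zero
    (convex_iInter₂ fun b _ => convex_ball b 2).isPreconnected ((hmemJ E₀).2 (hs E₀ hE₀))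
    (Filter.eventually_of_mem (hUo.mem_nhds hE₀) (h ·)) ((hmemJ E).2 hE)

theorem eq_zero_of_sum_mul_phaseSpeed_eq_zero {U : Set ℝ} (hUo : IsOpen U) (hU : U.Nonempty)
    (s : Finset ℝ) (c : ℝ → ℝ) (hs : ∀ E ∈ U, ∀ b ∈ s, |E - b| < 2)
    (h : ∀ E ∈ U, ∑ b ∈ s, c b * phaseSpeed b E = 0) : ∀ b ∈ s, c b = 0 := by
  induction s using Finset.induction_on_min with
  | empty => simp
  | insert β s hβ ih =>
    have hβs : β ∉ s := fun hβs => lt_irrefl β (hβ β hβs)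
    have hnear : ∀ b ∈ insert β s, β ≤ b ∧ b < β + 4 := by
      obtain ⟨E₀, hE₀⟩ := hU
      intro b hb
      have h1 := abs_lt.mp (hs E₀ hE₀ b hb)
      have h2 := abs_lt.mp (hs E₀ hE₀ β (Finset.mem_insert_self β s))
      exact ⟨(Finset.mem_insert.mp hb).elim (·.ge) fun hb => (hβ b hb).le, by linarith⟩
    have hcβ : c β = 0 := by
      refine eq_zero_of_mul_phaseSpeed_eventuallyEq (β := β)
        (f := fun E => -∑ b ∈ s, c b * phaseSpeed b E) ?_ ?_
      · refine (analyticAt_sum_mul_phaseSpeed fun b hb => abs_lt.mpr ?_).continuousAt.neg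
        have := hnear b (Finset.mem_insert_of_mem hb)
        constructor <;> linarith [hβ b hb]
      · have hedge : ∀ᶠ E in 𝓝[<] (β + 2), ∀ b ∈ insert β s, |E - b| < 2 :=
          (Filter.eventually_all_finset _).2 fun b hb =>
            eventually_abs_sub_lt_two_nhdsLT (hnear b hb).1 (hnear b hb).2
        filter_upwards [hedge] with E hE
        have := sum_mul_phaseSpeed_eq_zero_of_eqOn_open hUo hU hs h hE
        rw [Finset.sum_insert hβs] at this
        linarith
    have hs' : ∀ E ∈ U, ∑ b ∈ s, c b * phaseSpeed b E = 0 := fun E hE => by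
      simpa [Finset.sum_insert hβs, hcβ] using h E hE
    intro b hb
    rcases Finset.mem_insert.mp hb with rfl | hb
    · exact hcβ
    · exact ih (fun E hE b hb => hs E hE b (Finset.mem_insert_of_mem hb)) hs' b hb

lemma sum_map_phaseSpeed_eq_sum_count_mul {M : Multiset ℝ} {s : Finset ℝ} (hM : M.toFinset ⊆ s)
    (E : ℝ) : (M.map (phaseSpeed · E)).sum = ∑ b ∈ s, (M.count b : ℝ) * phaseSpeed b E := by
  classical
  rw [Finset.sum_multiset_map_count, Finset.sum_subset hM]
  · simp only [nsmul_eq_mul]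
  · intro b _ hb
    simp [Multiset.count_eq_zero.2 (by simpa using hb)]

theorem eq_of_sum_map_phaseSpeed_eq {U : Set ℝ} (hUo : IsOpen U) (hU : U.Nonempty)
    {P N : Multiset ℝ} (hPN : ∀ E ∈ U, ∀ b ∈ P + N, |E - b| < 2)
    (h : ∀ E ∈ U, (P.map (phaseSpeed · E)).sum = (N.map (phaseSpeed · E)).sum) : P = N := by
  classical
  set s := (P + N).toFinset
  have hP : P.toFinset ⊆ s := Multiset.toFinset_subset.2 (Multiset.subset_of_le (by simp))
  have hN : N.toFinset ⊆ s := Multiset.toFinset_subset.2 (Multiset.subset_of_le (by simp))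
  have hc := eq_zero_of_sum_mul_phaseSpeed_eq_zero hUo hU s (fun b => (P.count b : ℝ) - N.count b)
    (fun E hE b hb => hPN E hE b (Multiset.mem_toFinset.1 hb)) fun E hE => by
      simp only [sub_mul, Finset.sum_sub_distrib, ← sum_map_phaseSpeed_eq_sum_count_mul hP,
        ← sum_map_phaseSpeed_eq_sum_count_mul hN, h E hE, sub_self]
  ext b
  by_cases hb : b ∈ s
  · exact_mod_cast sub_eq_zero.1 (hc b hb)
  · simp only [s, Multiset.mem_toFinset, Multiset.mem_add, not_or] at hb
    rw [Multiset.count_eq_zero.2 hb.1, Multiset.count_eq_zero.2 hb.2]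

lemma hasDerivAt_sum_map_phase {M : Multiset ℝ} {E : ℝ} (hM : ∀ b ∈ M, |E - b| < 2) :
    HasDerivAt (fun E => (M.map (phase · E)).sum) (-(M.map (phaseSpeed · E)).sum) E := by
  induction M using Multiset.induction_on with
  | empty => simpa using hasDerivAt_const E (0 : ℝ)
  | cons b M ih =>
    simp only [Multiset.mem_cons, forall_eq_or_imp] at hM
    simp only [Multiset.map_cons, Multiset.sum_cons, neg_add]
    exact (hasDerivAt_phase hM.1).add (ih hM.2)

lemma analyticAt_sum_map_phase {M : Multiset ℝ} {E : ℝ} (hM : ∀ b ∈ M, |E - b| < 2) :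
    AnalyticAt ℝ (fun E => (M.map (phase · E)).sum) E := by
  induction M using Multiset.induction_on with
  | empty => simpa using analyticAt_const
  | cons b M ih =>
    simp only [Multiset.mem_cons, forall_eq_or_imp] at hM
    simp only [Multiset.map_cons, Multiset.sum_cons]
    exact (analyticAt_phase hM.1).add (ih hM.2)

theorem ae_restrict_cexp_I_mul_netPhase_ne_one {μ : Measure ℝ} [NullSingletonClass μ]
    {U : Set ℝ} (hUo : IsOpen U) (hUc : IsPreconnected U) (hU : U.Nonempty)
    {P N : Multiset ℝ} (hPN : P ≠ N) (hb : ∀ E ∈ U, ∀ b ∈ P + N, |E - b| < 2) :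
    ∀ᵐ E ∂μ.restrict U, cexp (I * netPhase P N E) ≠ 1 := by
  have hP : ∀ E ∈ U, ∀ b ∈ P, |E - b| < 2 := fun E hE b h => hb E hE b (by simp [h])
  have hN : ∀ E ∈ U, ∀ b ∈ N, |E - b| < 2 := fun E hE b h => hb E hE b (by simp [h])
  refine ae_restrict_cexp_I_mul_ne_one hUo hUc
    (Φ' := fun E => (N.map (phaseSpeed · E)).sum - (P.map (phaseSpeed · E)).sum)
    (fun E hE => (analyticAt_sum_map_phase (hP E hE)).sub (analyticAt_sum_map_phase (hN E hE)))
    (fun E hE => ?_) ?_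
  · have := (hasDerivAt_sum_map_phase (hP E hE)).sub (hasDerivAt_sum_map_phase (hN E hE))
    exact this.congr_deriv (by ring)
  · by_contra! h
    exact hPN (eq_of_sum_map_phaseSpeed_eq hUo hU hb fun E hE => (sub_eq_zero.1 (h E hE)).symm)

lemma conj_cexp_I_mul (x : ℝ) : (starRingEnd ℂ) (cexp (I * x)) = cexp (-(I * x)) := by
  rw [← Complex.exp_conj]
  simp

/-- For almost every energy `E` in `I`, the tuple
`z_j(E) = exp(i·arccos((E − a_j)/2))` is chaotic. -/
theorem stmt_7 {m : ℕ} (a : Fin m → ℝ) (ha : Function.Injective a)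
    (lo hi : ℝ) (hlohi : lo < hi)
    (hI : ∀ E ∈ Set.Ioo lo hi, ∀ j, |E - a j| < 2)
    (z : Fin m → ℝ → ℂ)
    (hz : ∀ j E, z j E =
      Complex.exp (Complex.I * (Real.arccos ((E - a j) / 2) : ℂ))) :
    ∀ᵐ E ∂(volume.restrict (Set.Ioo lo hi)), ∀ i j k l : Fin m,
      z i E * z j E * z k E * z l E ≠ 1 ∧
      (starRingEnd ℂ) (z i E) * z j E * z k E * z l E ≠ 1 ∧
      ((starRingEnd ℂ) (z i E) * (starRingEnd ℂ) (z j E) * z k E * z l E = 1 →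
        ({i, j} : Set (Fin m)) = {k, l}) := by
  have hz' : ∀ t E, z t E = cexp (I * phase (a t) E) := hz
  have key : ∀ P N : Multiset (Fin m), P ≠ N →
      ∀ᵐ E ∂volume.restrict (Ioo lo hi), cexp (I * netPhase (P.map a) (N.map a) E) ≠ 1 := by
    refine fun P N hPN => ae_restrict_cexp_I_mul_netPhase_ne_one isOpen_Ioo isPreconnected_Ioo
      (nonempty_Ioo.2 hlohi) ((Multiset.map_injective ha).ne hPN) fun E hE b hb => ?_
    simp only [Multiset.mem_add, Multiset.mem_map] at hb
    rcases hb with ⟨t, -, rfl⟩ | ⟨t, -, rfl⟩ <;> exact hI E hE t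
  refine ae_all_iff.2 fun i => ae_all_iff.2 fun j => ae_all_iff.2 fun k => ae_all_iff.2 fun l => ?_
  have hpair : ∀ᵐ E ∂volume.restrict (Ioo lo hi),
      cexp (I * netPhase (Multiset.map a {k, l}) (Multiset.map a {i, j}) E) = 1 →
        ({i, j} : Set (Fin m)) = {k, l} := by
    by_cases hP : ({k, l} : Multiset (Fin m)) = {i, j}
    · refine Eventually.of_forall fun _ _ => ?_
      simpa using (congrArg (fun M : Multiset (Fin m) => (M.toFinset : Set (Fin m))) hP).symm
    · filter_upwards [key _ _ hP] with E hE h using absurd h hE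
  filter_upwards [key {i, j, k, l} 0 (by simp),
    key {j, k, l} {i} fun h => by simpa using congrArg Multiset.card h, hpair] with E h1 h2 h3
  refine ⟨fun h => h1 ?_, fun h => h2 ?_, fun h => h3 ?_⟩
  all_goals
    rw [← h]
    simp only [hz', conj_cexp_I_mul, ← Complex.exp_add]
    congr 1
    simp only [netPhase, Multiset.insert_eq_cons, Multiset.map_cons, Multiset.map_singleton,
      Multiset.map_zero, Multiset.sum_cons, Multiset.sum_singleton, Multiset.sum_zero]
    push_cast
    ring
end

section
/- Fix integers d, n ≥ 1, a real number λ, a real number E, a Hermitian d×d complex matrix A and Hermitian d×d complex matrices V₁, …, V_n. Define the Hermitian nd×nd matrix H acting on ψ = (ψ₁,…,ψ_n) ∈ (ℂ^d)^n by (Hψ)_k = ψ_{k+1} + ψ_{k−1} + (A + λ·V_k)·ψ_k, with the convention ψ₀ = ψ_{n+1} = 0. For k = 1,…,n define the 2d×2d transfer matrix T_k = [[E·1_d − A − λ·V_k, −1_d],[1_d, 0]]. Then E is an eigenvalue of H if and only if the determinant of the upper-left d×d block of the product T_n·T_{n−1}·⋯·T_1 is zero. -/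
open Matrix

/-!
Write the eigenvalue equation as `ψ (k+1) + ψ (k-1) = B k ψ k` with `B k = E - A - λ V k`.
Then `T_k (ψ k, ψ (k-1)) = (ψ (k+1), ψ k)`, so every solution with `ψ 0 = 0` satisfies
`T_k ⋯ T_1 (ψ 1, 0) = (ψ (k+1), ψ k)`: it is determined by `ψ 1`, and the boundary condition
`ψ (n+1) = 0` says exactly that `ψ 1` lies in the kernel of the upper-left block of `T_n ⋯ T_1`.
-/

section Transfer

variable {m R : Type*} [Fintype m]

theorem fromBlocks_neg_one_one_zero_mulVec [DecidableEq m] [Ring R] (B : Matrix m m R)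
    (x y : m → R) :
    fromBlocks B (-1) 1 0 *ᵥ Sum.elim x y = Sum.elim (B *ᵥ x - y) x := by
  rw [fromBlocks_mulVec]
  simp only [Sum.elim_comp_inl, Sum.elim_comp_inr, neg_mulVec, one_mulVec, zero_mulVec,
    add_zero, ← sub_eq_add_neg]

theorem mulVec_sum_elim_zero_inl [NonUnitalNonAssocSemiring R]
    (M : Matrix (m ⊕ m) (m ⊕ m) R) (v : m → R) (i : m) :
    (M *ᵥ Sum.elim v 0) (Sum.inl i) = (M.toBlocks₁₁ *ᵥ v) i := by
  conv_lhs => rw [← fromBlocks_toBlocks M]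
  simp [fromBlocks_mulVec]

theorem smul_one_sub_mulVec [DecidableEq m] [CommRing R] (c : R) (M : Matrix m m R) (x : m → R) :
    (c • (1 : Matrix m m R) - M) *ᵥ x = c • x - M *ᵥ x := by
  rw [sub_mulVec, smul_mulVec, one_mulVec]

variable [Ring R] {B : ℕ → Matrix m m R} {P : ℕ → Matrix (m ⊕ m) (m ⊕ m) R}

theorem transferProduct_mulVec [DecidableEq m] (hP0 : P 0 = 1)
    (hP : ∀ k, P (k + 1) = fromBlocks (B (k + 1)) (-1) 1 0 * P k)
    {ψ : ℕ → m → R} (hψ0 : ψ 0 = 0) {k : ℕ}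
    (hψ : ∀ j ∈ Finset.Icc 1 k, ψ (j + 1) + ψ (j - 1) = B j *ᵥ ψ j) :
    P k *ᵥ Sum.elim (ψ 1) 0 = Sum.elim (ψ (k + 1)) (ψ k) := by
  induction k with
  | zero => rw [hP0, one_mulVec, hψ0]
  | succ k ih =>
    have hstep : B (k + 1) *ᵥ ψ (k + 1) - ψ k = ψ (k + 2) := by
      rw [← hψ (k + 1) (by simp), Nat.add_sub_cancel, add_sub_cancel_right]
    rw [hP, ← mulVec_mulVec, ih fun j hj => hψ j (Finset.Icc_subset_Icc_right k.le_succ hj),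
      fromBlocks_neg_one_one_zero_mulVec, hstep]

def transferSolution (B : ℕ → Matrix m m R) (v : m → R) : ℕ → m → R
  | 0 => 0
  | 1 => v
  | k + 2 => B (k + 1) *ᵥ transferSolution B v (k + 1) - transferSolution B v k

theorem transferSolution_add_sub (v : m → R) {j : ℕ} (hj : 1 ≤ j) :
    transferSolution B v (j + 1) + transferSolution B v (j - 1) =
      B j *ᵥ transferSolution B v j := by
  obtain ⟨k, rfl⟩ := Nat.exists_eq_add_of_le' hj
  simp only [transferSolution, Nat.add_sub_cancel, sub_add_cancel]

end Transfer

section Dirichlet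

variable {m K : Type*} [Fintype m] [DecidableEq m] [CommRing K] [IsDomain K]
  {B : ℕ → Matrix m m K} {P : ℕ → Matrix (m ⊕ m) (m ⊕ m) K}

theorem exists_dirichlet_solution_iff_det_toBlocks₁₁ (hP0 : P 0 = 1)
    (hP : ∀ k, P (k + 1) = fromBlocks (B (k + 1)) (-1) 1 0 * P k) (n : ℕ) :
    (∃ ψ : ℕ → m → K, ψ 0 = 0 ∧ ψ (n + 1) = 0 ∧ (∃ k ∈ Finset.Icc 1 n, ψ k ≠ 0) ∧
      ∀ k ∈ Finset.Icc 1 n, ψ (k + 1) + ψ (k - 1) = B k *ᵥ ψ k) ↔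
      (P n).toBlocks₁₁.det = 0 := by
  have kernel_of_solution {ψ : ℕ → m → K} (hψ0 : ψ 0 = 0)
      (hψ : ∀ k ∈ Finset.Icc 1 n, ψ (k + 1) + ψ (k - 1) = B k *ᵥ ψ k) :
      (P n).toBlocks₁₁ *ᵥ ψ 1 = ψ (n + 1) := funext fun i => by
    rw [← mulVec_sum_elim_zero_inl, transferProduct_mulVec hP0 hP hψ0 hψ, Sum.elim_inl]
  rw [← exists_mulVec_eq_zero_iff]
  constructor
  · rintro ⟨ψ, hψ0, hψn, ⟨k, hk, hψk⟩, hψ⟩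
    refine ⟨ψ 1, fun hψ1 => hψk ?_, (kernel_of_solution hψ0 hψ).trans hψn⟩
    have htransfer := transferProduct_mulVec hP0 hP hψ0
      fun j hj => hψ j (Finset.Icc_subset_Icc_right (Finset.mem_Icc.mp hk).2 hj)
    funext i
    simpa [hψ1] using (congrFun htransfer (Sum.inr i)).symm
  · rintro ⟨v, hv, hker⟩
    have hsol (k) (hk : k ∈ Finset.Icc 1 n) := transferSolution_add_sub (B := B) v
      (Finset.mem_Icc.mp hk).1
    have hψn : transferSolution B v (n + 1) = 0 :=
      (kernel_of_solution rfl hsol).symm.trans hker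
    -- `ψ 1 = v ≠ 0` forces `n ≠ 0` through the boundary condition.
    have hn : n ≠ 0 := by
      rintro rfl
      exact hv hψn
    exact ⟨transferSolution B v, rfl, hψn,
      ⟨1, Finset.mem_Icc.mpr ⟨le_rfl, Nat.one_le_iff_ne_zero.mpr hn⟩, hv⟩, hsol⟩

end Dirichlet

theorem stmt_9_general {d n : ℕ} (l E : ℝ)
    (A : Matrix (Fin d) (Fin d) ℂ)
    (V : ℕ → Matrix (Fin d) (Fin d) ℂ)
    (T : ℕ → Matrix (Fin d ⊕ Fin d) (Fin d ⊕ Fin d) ℂ)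
    (hT : ∀ k, T k = Matrix.fromBlocks
      ((E : ℂ) • (1 : Matrix (Fin d) (Fin d) ℂ) - A - l • V k) (-1) 1 0)
    (P : ℕ → Matrix (Fin d ⊕ Fin d) (Fin d ⊕ Fin d) ℂ)
    (hP0 : P 0 = 1) (hPk : ∀ k, P (k + 1) = T (k + 1) * P k) :
    (∃ ψ : ℕ → (Fin d → ℂ),
      ψ 0 = 0 ∧ ψ (n + 1) = 0 ∧ (∃ k ∈ Finset.Icc 1 n, ψ k ≠ 0) ∧
      ∀ k ∈ Finset.Icc 1 n,
        ψ (k + 1) + ψ (k - 1) + (A + l • V k).mulVec (ψ k) = (E : ℂ) • ψ k)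
    ↔ ((P n).toBlocks₁₁).det = 0 := by
  rw [← exists_dirichlet_solution_iff_det_toBlocks₁₁
    (B := fun k => (E : ℂ) • 1 - A - l • V k) hP0 (fun k => (hPk k).trans (by rw [hT])) n]
  refine exists_congr fun ψ => and_congr_right' <| and_congr_right' <| and_congr_right' <|
    forall₂_congr fun k _ => ?_
  rw [sub_sub, smul_one_sub_mulVec, eq_sub_iff_add_eq]

/-- `E` is an eigenvalue of the block Jacobi operator `H` iff the determinant of
the upper-left `d×d` block of the transfer matrix product `T_n ⋯ T_1`
vanishes. -/
theorem stmt_9 {d n : ℕ} (hd : 1 ≤ d) (hn : 1 ≤ n) (l E : ℝ)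
    (A : Matrix (Fin d) (Fin d) ℂ) (hA : A.IsHermitian)
    (V : ℕ → Matrix (Fin d) (Fin d) ℂ) (hV : ∀ k, (V k).IsHermitian)
    (T : ℕ → Matrix (Fin d ⊕ Fin d) (Fin d ⊕ Fin d) ℂ)
    (hT : ∀ k, T k = Matrix.fromBlocks
      ((E : ℂ) • (1 : Matrix (Fin d) (Fin d) ℂ) - A - l • V k) (-1) 1 0)
    (P : ℕ → Matrix (Fin d ⊕ Fin d) (Fin d ⊕ Fin d) ℂ)
    (hP0 : P 0 = 1) (hPk : ∀ k, P (k + 1) = T (k + 1) * P k) :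
    (∃ ψ : ℕ → (Fin d → ℂ),
      ψ 0 = 0 ∧ ψ (n + 1) = 0 ∧ (∃ k ∈ Finset.Icc 1 n, ψ k ≠ 0) ∧
      ∀ k ∈ Finset.Icc 1 n,
        ψ (k + 1) + ψ (k - 1) + (A + l • V k).mulVec (ψ k) = (E : ℂ) • ψ k)
    ↔ ((P n).toBlocks₁₁).det = 0 :=
  stmt_9_general l E A V T hT P hP0 hPk
end

section
/- Let d ≥ 1. Define the 2d×2d matrices (1-based indices): M by M_{jk} = binom(2d−j, k−1) if j + k ≤ 2d+1 and 0 otherwise; T by T_{1,k} = (−1)^{k+1}·binom(2d, 2d−k) for 1 ≤ k ≤ 2d, T_{j,j−1} = 1 for 2 ≤ j ≤ 2d, and all other entries 0; and the Jordan block J = 1_{2d} + N where N_{j,j+1} = 1 for 1 ≤ j ≤ 2d−1 and all other entries of N are 0. Then T·M = M·J; in particular M⁻¹·T·M = J, i.e. T is conjugate to a single 2d×2d Jordan block with eigenvalue 1. -/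
/-!
With `n = 2d`, `T` is the companion matrix of `(X - 1) ^ n` and `M j k = C(n - 1 - j, k)` is
Pascal's matrix with reversed rows. Multiplying on the right by `J = 1 + N` adds to each column
its left neighbour, so by Pascal's rule row `j` of `M J` is `C(n - j, ·)`. Row `j ≥ 1` of `T M` is
row `j - 1` of `M`, which is the same; the first row of `T M` is, after reflecting the index,
`(-1) ^ (n + 1) ∑_{m < n} (-1) ^ m C(n, m) C(m, k)`, and this is `C(n, k)` because
`C(n, m) C(m, k) = C(n, k) C(n - k, m - k)` makes the full alternating sum over `m ≤ n` vanish
for `k < n`. Finally `M` is anti-triangular with ones on the anti-diagonal, so `det M = ±1`.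
-/

open Matrix Finset

theorem Fin.sum_ite_val_add_one_eq {M : Type*} [AddCommMonoid M] (g : ℕ → M) {n k : ℕ}
    (hk : k ≤ n) :
    ∑ l : Fin n, (if (l : ℕ) + 1 = k then g l else 0) = if k = 0 then 0 else g (k - 1) := by
  rw [Fin.sum_univ_eq_sum_range (fun l => if l + 1 = k then g l else 0)]
  rcases k with _ | k
  · simp
  · simp only [Nat.add_right_cancel_iff, sum_ite_eq', mem_range]
    simp [show k < n by omega]

theorem sum_range_neg_one_pow_mul_choose_mul_choose {n k : ℕ} (hk : k < n) :
    ∑ m ∈ range (n + 1), (-1 : ℤ) ^ m * n.choose m * m.choose k = 0 := by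
  have hlow : ∀ m ∈ range k, (-1 : ℤ) ^ m * n.choose m * m.choose k = 0 := fun m hm => by
    simp [Nat.choose_eq_zero_of_lt (mem_range.mp hm)]
  have hfactor : ∀ j ∈ range (n - k + 1), (-1 : ℤ) ^ (k + j) * n.choose (k + j) * (k + j).choose k
      = (-1) ^ k * n.choose k * ((-1) ^ j * (n - k).choose j) := fun j _ => by
    have := Nat.choose_mul (n := n) (Nat.le_add_right k j)
    rw [Nat.add_sub_cancel_left] at this
    rw [pow_add, mul_assoc, ← Nat.cast_mul, this, Nat.cast_mul]
    ring
  rw [show n + 1 = k + (n - k + 1) by omega, sum_range_add, sum_eq_zero hlow, zero_add,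
    sum_congr rfl hfactor, ← mul_sum, Int.alternating_sum_range_choose_of_ne (by omega), mul_zero]

theorem sum_range_neg_one_pow_mul_choose_sub_mul_choose {n k : ℕ} (hk : k < n) :
    ∑ l ∈ range n, (-1 : ℤ) ^ (l + 1 + 1) * n.choose (n - (l + 1)) * (n - 1 - l).choose k
      = n.choose k := by
  have hreflect : ∀ m ∈ range n,
      (-1 : ℤ) ^ (n - 1 - m + 1 + 1) * n.choose (n - (n - 1 - m + 1)) *
          (n - 1 - (n - 1 - m)).choose k =
        (-1) ^ (n + 1) * ((-1) ^ m * n.choose m * m.choose k) := fun m hm => by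
    have hm := mem_range.mp hm
    have hsign : (-1 : ℤ) ^ (n + 1) * (-1) ^ m = (-1) ^ (n - 1 - m + 1 + 1) := by
      rw [← pow_add, show n + 1 + m = (n - 1 - m + 1 + 1) + 2 * m by omega, pow_add, pow_mul]
      norm_num
    rw [show n - (n - 1 - m + 1) = m by omega, show n - 1 - (n - 1 - m) = m by omega, ← hsign]
    ring
  have hsum := sum_range_neg_one_pow_mul_choose_mul_choose hk
  rw [sum_range_succ, Nat.choose_self, Nat.cast_one, mul_one] at hsum
  rw [← sum_range_reflect, sum_congr rfl hreflect, ← mul_sum, eq_neg_of_add_eq_zero_left hsum,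
    mul_neg, ← mul_assoc, ← pow_add, show n + 1 + n = 2 * n + 1 by ring, pow_succ, pow_mul]
  norm_num

def revPascal (n : ℕ) : Matrix (Fin n) (Fin n) ℤ :=
  of fun j k => ((n - 1 - j).choose k : ℤ)

def upperShift (n : ℕ) : Matrix (Fin n) (Fin n) ℤ :=
  of fun j k => if (j : ℕ) + 1 = k then 1 else 0

/-- The companion matrix of `(X - 1) ^ n`, with the coefficients in the first row. -/
def binomCompanion (n : ℕ) : Matrix (Fin n) (Fin n) ℤ :=
  of fun j k =>
    if (j : ℕ) = 0 then (-1 : ℤ) ^ (((k : ℕ) + 1) + 1) * (n.choose (n - ((k : ℕ) + 1)) : ℤ)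
    else if (k : ℕ) + 1 = (j : ℕ) then 1 else 0

theorem revPascal_eq_ite (n : ℕ) :
    revPascal n = of fun j k : Fin n =>
      if (j : ℕ) + 1 + ((k : ℕ) + 1) ≤ n + 1 then (Nat.choose (n - ((j : ℕ) + 1)) (k : ℕ) : ℤ)
      else 0 := by
  ext j k
  simp only [revPascal, of_apply]
  split_ifs with h
  · rw [show n - (j + 1) = n - 1 - j by omega]
  · rw [Nat.choose_eq_zero_of_lt (by omega), Nat.cast_zero]

theorem revPascal_mul_one_add_upperShift (n : ℕ) :
    revPascal n * (1 + upperShift n) = of fun j k : Fin n => ((n - j).choose k : ℤ) := by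
  ext j k
  rw [mul_add, mul_one, Matrix.add_apply, mul_apply]
  simp only [revPascal, upperShift, of_apply, mul_ite, mul_one, mul_zero]
  rw [Fin.sum_ite_val_add_one_eq (fun l => ((n - 1 - j).choose l : ℤ)) k.isLt.le,
    show n - j = n - 1 - j + 1 by omega]
  rcases Nat.eq_zero_or_eq_succ_pred (k : ℕ) with hk | hk
  · simp [hk]
  · rw [if_neg (by omega), hk, Nat.choose_succ_succ', Nat.succ_sub_one, Nat.cast_add]
    ring

theorem binomCompanion_mul_revPascal (n : ℕ) :
    binomCompanion n * revPascal n = of fun j k : Fin n => ((n - j).choose k : ℤ) := by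
  ext j k
  rw [mul_apply]
  simp only [binomCompanion, revPascal, of_apply]
  by_cases hj : (j : ℕ) = 0
  · simp only [hj, if_true, Nat.sub_zero]
    rw [Fin.sum_univ_eq_sum_range (fun l => (-1 : ℤ) ^ (l + 1 + 1) * n.choose (n - (l + 1)) *
      (n - 1 - l).choose k), sum_range_neg_one_pow_mul_choose_sub_mul_choose k.isLt]
  · simp only [hj, if_false, ite_mul, one_mul, zero_mul]
    rw [Fin.sum_ite_val_add_one_eq (fun l => ((n - 1 - l).choose k : ℤ)) j.isLt.le, if_neg hj,
      show n - 1 - (j - 1) = n - j by omega]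

theorem isUnit_det_revPascal (n : ℕ) : IsUnit (revPascal n).det := by
  have htri : ((revPascal n).submatrix id Fin.revPerm).IsUpperTriangular := by
    intro a b hab
    simp only [submatrix_apply, id_eq, Fin.revPerm_apply, revPascal, of_apply] at hab ⊢
    rw [Nat.choose_eq_zero_of_lt (by rw [Fin.val_rev]; omega), Nat.cast_zero]
  have hdiag : ((revPascal n).submatrix id Fin.revPerm).det = 1 := by
    rw [det_of_isUpperTriangular htri]
    refine prod_eq_one fun i _ => ?_
    simp only [submatrix_apply, id_eq, Fin.revPerm_apply, revPascal, of_apply, Fin.val_rev]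
    rw [show n - (i + 1) = n - 1 - i by omega, Nat.choose_self, Nat.cast_one]
  have hperm := det_permute' Fin.revPerm (revPascal n)
  rw [hdiag] at hperm
  exact IsUnit.of_mul_eq_one_right _ hperm.symm

theorem stmt_14_general {d : ℕ}
    (M T J Nn : Matrix (Fin (2 * d)) (Fin (2 * d)) ℤ)
    (hM : M = Matrix.of fun j k : Fin (2 * d) =>
      if (j : ℕ) + 1 + ((k : ℕ) + 1) ≤ 2 * d + 1 then
        (Nat.choose (2 * d - ((j : ℕ) + 1)) (k : ℕ) : ℤ)
      else 0)
    (hT : T = Matrix.of fun j k : Fin (2 * d) =>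
      if (j : ℕ) = 0 then
        (-1 : ℤ) ^ (((k : ℕ) + 1) + 1) *
          (Nat.choose (2 * d) (2 * d - ((k : ℕ) + 1)) : ℤ)
      else if (k : ℕ) + 1 = (j : ℕ) then 1 else 0)
    (hNn : Nn = Matrix.of fun j k : Fin (2 * d) =>
      if (j : ℕ) + 1 = (k : ℕ) then (1 : ℤ) else 0)
    (hJ : J = 1 + Nn) :
    T * M = M * J ∧ M⁻¹ * T * M = J := by
  rw [← revPascal_eq_ite] at hM
  have hTM : T * M = M * J := by
    rw [hM, hJ, hNn, hT]
    exact (binomCompanion_mul_revPascal _).trans (revPascal_mul_one_add_upperShift _).symm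
  have hdet : IsUnit M.det := hM ▸ isUnit_det_revPascal _
  refine ⟨hTM, ?_⟩
  rw [mul_assoc, hTM, ← mul_assoc, nonsing_inv_mul M hdet, one_mul]

/-- The companion-type transfer matrix `T` at the band edge is conjugated by the
Pascal matrix `M` into a single Jordan block `J` with eigenvalue `1`:
`T·M = M·J`, hence `M⁻¹·T·M = J`. -/
theorem stmt_14 {d : ℕ} (hd : 1 ≤ d)
    (M T J Nn : Matrix (Fin (2 * d)) (Fin (2 * d)) ℤ)
    (hM : M = Matrix.of fun j k : Fin (2 * d) =>
      if (j : ℕ) + 1 + ((k : ℕ) + 1) ≤ 2 * d + 1 then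
        (Nat.choose (2 * d - ((j : ℕ) + 1)) (k : ℕ) : ℤ)
      else 0)
    (hT : T = Matrix.of fun j k : Fin (2 * d) =>
      if (j : ℕ) = 0 then
        (-1 : ℤ) ^ (((k : ℕ) + 1) + 1) *
          (Nat.choose (2 * d) (2 * d - ((k : ℕ) + 1)) : ℤ)
      else if (k : ℕ) + 1 = (j : ℕ) then 1 else 0)
    (hNn : Nn = Matrix.of fun j k : Fin (2 * d) =>
      if (j : ℕ) + 1 = (k : ℕ) then (1 : ℤ) else 0)
    (hJ : J = 1 + Nn) :
    T * M = M * J ∧ M⁻¹ * T * M = J :=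
  stmt_14_general M T J Nn hM hT hNn hJ
end

section
/- Let d ≥ 1. Define the 2d×2d matrices (1-based indices): M by M_{jk} = binom(2d−j, k−1) if j + k ≤ 2d+1 and 0 otherwise; S by S_{1,d} = 1 and all other entries 0; and R by R_{2d,k} = binom(d, k−1) for 1 ≤ k ≤ d+1 and all other entries 0. Then S·M = M·R; in particular M⁻¹·S·M = R, a matrix whose only nonzero row is the last row, with entries binom(d, k−1) in columns k = 1,…,d+1. -/
/-!
`M` is the lower Pascal matrix `(binom(i, k))` with its rows listed in reverse order, so it is
unitriangular up to a row permutation and invertible over `ℤ`. Its last column is the first standard basis vector, hence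
`M · E_{2d,d} = E_{1,d} = S`, and `S · M = M · (E_{2d,d} · M)`; the matrix `E_{2d,d} · M`
carries row `d` of `M`, namely `binom(d, ·)`, in its last row, and is `R`.
-/

open Matrix

namespace Matrix

variable {R : Type*}

def pascal (R : Type*) [NatCast R] (n : ℕ) : Matrix (Fin n) (Fin n) R :=
  of fun i k => ((i : ℕ).choose k : R)

def revPascal (R : Type*) [NatCast R] (n : ℕ) : Matrix (Fin n) (Fin n) R :=
  (pascal R n).submatrix Fin.revPerm id

theorem pascal_isLowerTriangular [Semiring R] (n : ℕ) : (pascal R n).IsLowerTriangular :=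
  fun i k (hik : i < k) => by rw [pascal, of_apply, Nat.choose_eq_zero_of_lt hik, Nat.cast_zero]

theorem det_pascal [CommRing R] (n : ℕ) : (pascal R n).det = 1 := by
  rw [det_of_isLowerTriangular _ (pascal_isLowerTriangular n)]
  simp [pascal]

theorem isUnit_det_revPascal [CommRing R] (n : ℕ) : IsUnit (revPascal R n).det := by
  rw [revPascal, det_permute, det_pascal, mul_one]
  exact (Units.isUnit _).map (Int.castRingHom R)

theorem revPascal_apply [NatCast R] {n : ℕ} (j k : Fin n) :
    revPascal R n j k = ((n - (j + 1)).choose k : R) := by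
  simp [revPascal, pascal, Fin.val_rev]

theorem revPascal_apply_of_val_add_one_eq [Semiring R] {n : ℕ} {a l : Fin n}
    (ha : (a : ℕ) = 0) (hl : (l : ℕ) + 1 = n) (j : Fin n) :
    revPascal R n j l = if j = a then 1 else 0 := by
  rw [revPascal_apply]
  split_ifs with hj
  · rw [hj, ha, show n - (0 + 1) = l by omega, Nat.choose_self, Nat.cast_one]
  · have hj0 : (j : ℕ) ≠ 0 := fun h => hj (Fin.ext (h.trans ha.symm))
    rw [Nat.choose_eq_zero_of_lt (by omega), Nat.cast_zero]

theorem mul_single_eq_single_of_forall_apply_eq {m n o : Type*} [Fintype m] [DecidableEq m]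
    [DecidableEq n] [DecidableEq o] [Semiring R] {A : Matrix n m R} {l : m} {a : n}
    (hA : ∀ i, A i l = if i = a then 1 else 0) (b : o) (c : R) :
    A * single l b c = single a b c := by
  ext i j
  by_cases hj : j = b
  · subst hj
    by_cases hi : i = a
    · simp [hA, hi]
    · simp [hA, hi, single_apply_of_ne, Ne.symm hi]
  · simp [hj, single_apply_of_ne, Ne.symm hj]

end Matrix

/-- Conjugating the rank-one matrix `S` (with `S_{1,d} = 1`) by the Pascal
matrix `M` yields the matrix `R` whose only nonzero row is the last one, with
binomial entries: `S·M = M·R`, hence `M⁻¹·S·M = R`. -/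
theorem stmt_15 {d : ℕ} (hd : 1 ≤ d)
    (M S R : Matrix (Fin (2 * d)) (Fin (2 * d)) ℤ)
    (hM : M = Matrix.of fun j k : Fin (2 * d) =>
      if (j : ℕ) + 1 + ((k : ℕ) + 1) ≤ 2 * d + 1 then
        (Nat.choose (2 * d - ((j : ℕ) + 1)) (k : ℕ) : ℤ)
      else 0)
    (hS : S = Matrix.of fun j k : Fin (2 * d) =>
      if (j : ℕ) + 1 = 1 ∧ (k : ℕ) + 1 = d then (1 : ℤ) else 0)
    (hR : R = Matrix.of fun j k : Fin (2 * d) =>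
      if (j : ℕ) + 1 = 2 * d ∧ (k : ℕ) + 1 ≤ d + 1 then
        (Nat.choose d (k : ℕ) : ℤ)
      else 0) :
    S * M = M * R ∧ M⁻¹ * S * M = R := by
  let first : Fin (2 * d) := ⟨0, by omega⟩
  let mid : Fin (2 * d) := ⟨d - 1, by omega⟩
  let last : Fin (2 * d) := ⟨2 * d - 1, by omega⟩
  have hM' : M = revPascal ℤ (2 * d) := by
    ext j k
    rw [hM, of_apply, revPascal_apply]
    split_ifs
    · rfl
    · rw [Nat.choose_eq_zero_of_lt (by omega), Nat.cast_zero]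
  have hS' : S = single first mid 1 := by
    ext j k
    simp only [hS, single, of_apply, first, mid, Fin.ext_iff]
    split_ifs <;> first | rfl | omega
  have hR' : R = single last mid 1 * M := by
    ext j k
    rw [hR, of_apply]
    by_cases hj : j = last
    · have hrow : 2 * d - ((mid : ℕ) + 1) = d := by simp only [mid]; omega
      rw [hj, single_mul_apply_same, one_mul, hM', revPascal_apply, hrow]
      split_ifs with hk
      · rfl
      · rw [Nat.choose_eq_zero_of_lt (by simp only [last] at hk; omega), Nat.cast_zero]
    · rw [single_mul_apply_of_ne _ _ _ _ _ hj, if_neg]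
      rintro ⟨hj', -⟩
      exact hj (Fin.ext (by simp only [last]; omega))
  have hSM : S * M = M * R := by
    rw [hS', hR', ← mul_assoc, hM',
      mul_single_eq_single_of_forall_apply_eq
        (revPascal_apply_of_val_add_one_eq (a := first) (l := last) rfl (by simp only [last]; omega))]
  refine ⟨hSM, ?_⟩
  rw [mul_assoc, hSM, nonsing_inv_mul_cancel_left _ _ (hM' ▸ isUnit_det_revPascal _)]
end
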